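/- Let β, r, θ, c > 0. The map V₁ has a unique positive fixed point (a point (u,v) with u > 0, v > 0 and V₁(u,v) = (u,v)) if and only if β > r and 0 < θ < (β - r)(1+c). In that case the fixed point is (ū, 1-ū) with ū = (r c + θ - β + √((β - r c - θ)² + 4 r c β))/(2 c β), and 0 < ū < 1. -/

import Mathlib

/-!
A positive fixed point `(u, v)` of `V₁` satisfies `u (1 - u - v) = 0` and, after clearing the
positive denominator `1 + c u`, `v (c β u² + (β - r c - θ) u - r) = 0`. So `v = 1 - u` and `u` is
a positive root of an upward parabola with negative value at `0`. That parabola has exactly one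
positive root, namely `ū`, and `ū < 1` holds exactly when the parabola is positive at `1`, where it
takes the value `(β - r)(1 + c) - θ`. Hence positive fixed points exist, and are then unique, iff
`θ < (β - r)(1 + c)`; for `θ > 0` this forces `r < β`.
-/

/-- The map `V₁(u,v) = (u(2-u) - u v, β u v + (1-r) v - θ u v/(1 + c u))`
(Holling type II toxin distribution). -/
noncomputable def V1 (β r θ c : ℝ) (p : ℝ × ℝ) : ℝ × ℝ :=
  (p.1 * (2 - p.1) - p.1 * p.2,
   β * p.1 * p.2 + (1 - r) * p.2 - θ * p.1 * p.2 / (1 + c * p.1))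

/-- The positive abscissa `ū = (rc + θ - β + √((β - rc - θ)² + 4rcβ))/(2cβ)`. -/
noncomputable def ubar (β r θ c : ℝ) : ℝ :=
  (r * c + θ - β + Real.sqrt ((β - r * c - θ) ^ 2 + 4 * r * c * β)) / (2 * c * β)

section Quadratic

variable {a b c x : ℝ}

theorem lt_sqrt_discrim_of_pos_of_neg (ha : 0 < a) (hc : c < 0) : |b| < √(discrim a b c) := by
  rw [Real.lt_sqrt (abs_nonneg b), sq_abs, discrim]
  nlinarith

theorem quadratic_pos_root_pos (ha : 0 < a) (hc : c < 0) :
    0 < (-b + √(discrim a b c)) / (2 * a) := by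
  have := lt_sqrt_discrim_of_pos_of_neg (b := b) ha hc
  have := le_abs_self b
  apply div_pos <;> linarith

theorem quadratic_eq_zero_iff_of_pos (ha : 0 < a) (hc : c < 0) (hx : 0 < x) :
    a * (x * x) + b * x + c = 0 ↔ x = (-b + √(discrim a b c)) / (2 * a) := by
  have hdisc : 0 ≤ discrim a b c := by rw [discrim]; nlinarith [sq_nonneg b]
  rw [quadratic_eq_zero_iff ha.ne' (Real.mul_self_sqrt hdisc).symm, or_iff_left_iff_imp]
  -- the other root `(-b - √Δ) / (2a)` is negative since `√Δ > |b|`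
  rintro rfl
  have := lt_sqrt_discrim_of_pos_of_neg (b := b) ha hc
  have := neg_abs_le b
  have : (-b - √(discrim a b c)) / (2 * a) < 0 := div_neg_of_neg_of_pos (by linarith) (by linarith)
  linarith

theorem lt_iff_quadratic_pos (ha : 0 < a) (hc : c < 0) (hx : 0 < x)
    (hroot : a * (x * x) + b * x + c = 0) {t : ℝ} (ht : 0 ≤ t) :
    x < t ↔ 0 < a * (t * t) + b * t + c := by
  have hslope : 0 < a * x + b := by nlinarith
  have hfactor : a * (t * t) + b * t + c = (t - x) * (a * (t + x) + b) := by
    linear_combination hroot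
  rw [hfactor, mul_pos_iff_of_pos_right (by nlinarith), sub_pos]

end Quadratic

theorem V1_eq_self_iff {β r θ c u v : ℝ} (hu : u ≠ 0) (hv : v ≠ 0) (hcu : 1 + c * u ≠ 0) :
    V1 β r θ c (u, v) = (u, v) ↔
      v = 1 - u ∧ c * β * (u * u) + (β - r * c - θ) * u - r = 0 := by
  have hfst : u * (2 - u) - u * v = u ↔ v = 1 - u := by
    rw [← sub_eq_zero, show u * (2 - u) - u * v - u = u * (1 - u - v) by ring,
      mul_eq_zero, or_iff_right hu, sub_eq_zero, eq_comm]
  have hsnd : β * u * v + (1 - r) * v - θ * u * v / (1 + c * u) = v ↔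
      c * β * (u * u) + (β - r * c - θ) * u - r = 0 := by
    rw [← sub_eq_zero, show β * u * v + (1 - r) * v - θ * u * v / (1 + c * u) - v =
        v * (c * β * (u * u) + (β - r * c - θ) * u - r) / (1 + c * u) by
          rw [eq_div_iff hcu, sub_mul, sub_mul, div_mul_cancel₀ _ hcu]; ring,
      div_eq_zero_iff, or_iff_left hcu, mul_eq_zero, or_iff_right hv]
  simp only [V1, Prod.mk.injEq, hfst, hsnd]

section V1

variable {β r θ c : ℝ}

theorem ubar_eq_quadratic_root :
    ubar β r θ c = (-(β - r * c - θ) + √(discrim (c * β) (β - r * c - θ) (-r))) / (2 * (c * β)) := by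
  simp only [ubar, discrim]
  ring_nf

variable (hβ : 0 < β) (hr : 0 < r) (hc : 0 < c)
include hβ hr hc

theorem ubar_pos : 0 < ubar β r θ c := by
  rw [ubar_eq_quadratic_root]
  exact quadratic_pos_root_pos (by positivity) (by linarith)

theorem quadratic_eq_zero_iff_eq_ubar {u : ℝ} (hu : 0 < u) :
    c * β * (u * u) + (β - r * c - θ) * u - r = 0 ↔ u = ubar β r θ c := by
  rw [sub_eq_add_neg, ubar_eq_quadratic_root]
  exact quadratic_eq_zero_iff_of_pos (by positivity) (by linarith) hu

theorem ubar_lt_one_iff : ubar β r θ c < 1 ↔ θ < (β - r) * (1 + c) := by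
  have hroot := ((quadratic_eq_zero_iff_eq_ubar (θ := θ) hβ hr hc (ubar_pos hβ hr hc)).2 rfl)
  rw [sub_eq_add_neg] at hroot
  rw [lt_iff_quadratic_pos (by positivity) (by linarith) (ubar_pos hβ hr hc) hroot zero_le_one]
  constructor <;> intro h <;> linarith

theorem positive_fixed_point_V1_iff {p : ℝ × ℝ} :
    (0 < p.1 ∧ 0 < p.2 ∧ V1 β r θ c p = p) ↔
      ubar β r θ c < 1 ∧ p = (ubar β r θ c, 1 - ubar β r θ c) := by
  obtain ⟨u, v⟩ := p
  dsimp only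
  have hpos := ubar_pos (θ := θ) hβ hr hc
  constructor
  · rintro ⟨hu, hv, hV⟩
    obtain ⟨rfl, hq⟩ := (V1_eq_self_iff hu.ne' hv.ne' (by positivity)).1 hV
    obtain rfl := (quadratic_eq_zero_iff_eq_ubar hβ hr hc hu).1 hq
    exact ⟨by simpa using hv, rfl⟩
  · rintro ⟨hlt, hp⟩
    obtain ⟨rfl, rfl⟩ := Prod.mk.inj hp
    have hv : 0 < 1 - ubar β r θ c := sub_pos.2 hlt
    refine ⟨hpos, hv, (V1_eq_self_iff hpos.ne' hv.ne' (by positivity)).2 ⟨rfl, ?_⟩⟩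
    exact (quadratic_eq_zero_iff_eq_ubar hβ hr hc hpos).2 rfl

end V1

/-- `V₁` has a unique positive fixed point iff `β > r` and `0 < θ < (β-r)(1+c)`;
in that case the fixed point is `(ū, 1-ū)` with `0 < ū < 1`. -/
theorem unique_positive_fixed_point_V1 (β r θ c : ℝ) (hβ : 0 < β) (hr : 0 < r)
    (hθ : 0 < θ) (hc : 0 < c) :
    ((∃! p : ℝ × ℝ, 0 < p.1 ∧ 0 < p.2 ∧ V1 β r θ c p = p) ↔
      (r < β ∧ 0 < θ ∧ θ < (β - r) * (1 + c))) ∧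
    (r < β → θ < (β - r) * (1 + c) →
      0 < ubar β r θ c ∧ ubar β r θ c < 1 ∧
      ∀ p : ℝ × ℝ, (0 < p.1 ∧ 0 < p.2 ∧ V1 β r θ c p = p) ↔
        p = (ubar β r θ c, 1 - ubar β r θ c)) := by
  have hrβ_of_lt : θ < (β - r) * (1 + c) → r < β := fun h ↦ by nlinarith
  simp only [positive_fixed_point_V1_iff hβ hr hc, ubar_lt_one_iff hβ hr hc]
  refine ⟨⟨?_, ?_⟩, fun _ h ↦ ⟨ubar_pos hβ hr hc, h, fun _ ↦ and_iff_right h⟩⟩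
  · rintro ⟨_, ⟨h, _⟩, _⟩
    exact ⟨hrβ_of_lt h, hθ, h⟩
  · rintro ⟨_, _, h⟩
    exact ⟨_, ⟨h, rfl⟩, fun _ hp ↦ hp.2⟩
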